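/- arXiv:2502.21070 — 4 statements merged into one kernel-verified Lean document; each statement's English description precedes it below -/
import Mathlib

section
/- Let (D, ≺⊥, ≻⊥, ≺⊢, ≻⊢, ≺⊣, ≻⊣) be a six-dendriform algebra over a field K of characteristic zero. Define x ⊥ y = x≺⊥y + x≻⊥y, x ⊢ y = x≺⊢y + x≻⊢y and x ⊣ y = x≺⊣y + x≻⊣y for all x, y ∈ D. Then (D, ⊥, ⊢, ⊣) is a tri-associative algebra. -/
/-- A bilinear map between modules over `K`. -/
def IsBilin (K : Type*) [Field K] {A B C : Type*}
    [AddCommGroup A] [Module K A] [AddCommGroup B] [Module K B]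
    [AddCommGroup C] [Module K C] (f : A → B → C) : Prop :=
  (∀ a a' b, f (a + a') b = f a b + f a' b) ∧
  (∀ (c : K) a b, f (c • a) b = c • f a b) ∧
  (∀ a b b', f a (b + b') = f a b + f a b') ∧
  (∀ (c : K) a b, f a (c • b) = c • f a b)

/-- A dendriform algebra structure `(D, ≺ = p, ≻ = s)`. -/
structure IsDendriform (K : Type*) [Field K] [CharZero K]
    (D : Type*) [AddCommGroup D] [Module K D]
    (p s : D → D → D) : Prop where
  bil_p : IsBilin K p
  bil_s : IsBilin K s
  d1 : ∀ x y z, p (p x y) z = p x (p y z + s y z)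
  d2 : ∀ x y z, p (s x y) z = s x (p y z)
  d3 : ∀ x y z, s x (s y z) = s (p x y + s x y) z

/-- A representation `(V; ≺ₗ = pl, ≻ₗ = sl, ≺ᵣ = pr, ≻ᵣ = sr)` of a dendriform
algebra `(D, p, s)`. -/
structure IsDendRep (K : Type*) [Field K] [CharZero K]
    (D : Type*) [AddCommGroup D] [Module K D]
    (V : Type*) [AddCommGroup V] [Module K V]
    (p s : D → D → D)
    (pl sl : D → V → V) (pr sr : V → D → V) : Prop where
  bil_pl : IsBilin K pl
  bil_sl : IsBilin K sl
  bil_pr : IsBilin K pr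
  bil_sr : IsBilin K sr
  r1 : ∀ x y u, pl (p x y) u = pl x (pl y u + sl y u)
  r2 : ∀ x y u, pl (s x y) u = sl x (pl y u)
  r3 : ∀ x y u, sl x (sl y u) = sl (p x y + s x y) u
  r4 : ∀ x u z, pr (pl x u) z = pl x (pr u z + sr u z)
  r5 : ∀ x u z, pr (sl x u) z = sl x (pr u z)
  r6 : ∀ x u z, sl x (sr u z) = sr (pl x u + sl x u) z
  r7 : ∀ u y z, pr (pr u y) z = pr u (p y z + s y z)
  r8 : ∀ u y z, pr (sr u y) z = sr u (p y z)
  r9 : ∀ u y z, sr u (s y z) = sr (pr u y + sr u y) z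

/-- A quadri-dendriform algebra `(D, ≺⊢ = pv, ≺⊣ = pd, ≻⊢ = sv, ≻⊣ = sd)`. -/
structure IsQuadriDendriform (K : Type*) [Field K] [CharZero K]
    (D : Type*) [AddCommGroup D] [Module K D]
    (pv pd sv sd : D → D → D) : Prop where
  bil_pv : IsBilin K pv
  bil_pd : IsBilin K pd
  bil_sv : IsBilin K sv
  bil_sd : IsBilin K sd
  q1a : ∀ x y z, pv (pv x y) z = pv x (pv y z + sv y z)
  q1b : ∀ x y z, pv (pd x y) z = pv x (pv y z + sv y z)
  q2a : ∀ x y z, pv (sv x y) z = sv x (pv y z)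
  q2b : ∀ x y z, pv (sd x y) z = sv x (pv y z)
  q3a : ∀ x y z, sv x (sv y z) = sv (pv x y + sv x y) z
  q3b : ∀ x y z, sv x (sv y z) = sv (pd x y + sd x y) z
  q3c : ∀ x y z, sv x (sv y z) = sv (pv x y + sd x y) z
  q3d : ∀ x y z, sv x (sv y z) = sv (pd x y + sv x y) z
  q4 : ∀ x y z, pd (pv x y) z = pv x (pd y z + sd y z)
  q5 : ∀ x y z, pd (sv x y) z = sv x (pd y z)
  q6 : ∀ x y z, sv x (sd y z) = sd (pv x y + sv x y) z
  q7a : ∀ x y z, pd (pd x y) z = pd x (pv y z + sv y z)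
  q7b : ∀ x y z, pd (pd x y) z = pd x (pd y z + sd y z)
  q7c : ∀ x y z, pd (pd x y) z = pd x (pv y z + sd y z)
  q7d : ∀ x y z, pd (pd x y) z = pd x (pd y z + sv y z)
  q8a : ∀ x y z, pd (sd x y) z = sd x (pv y z)
  q8b : ∀ x y z, pd (sd x y) z = sd x (pd y z)
  q9a : ∀ x y z, sd x (sv y z) = sd x (sd y z)
  q9b : ∀ x y z, sd x (sd y z) = sd (pd x y + sd x y) z

/-- A di-associative algebra `(A, ⊢ = l, ⊣ = r)`. -/
structure IsDiassoc (K : Type*) [Field K] [CharZero K]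
    (A : Type*) [AddCommGroup A] [Module K A]
    (l r : A → A → A) : Prop where
  bil_l : IsBilin K l
  bil_r : IsBilin K r
  d1 : ∀ x y z, r (r x y) z = r x (r y z)
  d2 : ∀ x y z, r (r x y) z = r x (l y z)
  d3 : ∀ x y z, r (l x y) z = l x (r y z)
  d4 : ∀ x y z, l (r x y) z = l x (l y z)
  d5 : ∀ x y z, l (l x y) z = l x (l y z)

/-- A tri-associative algebra `(A, ⊢ = l, ⊣ = r, ⊥ = m)`. -/
structure IsTriassoc (K : Type*) [Field K] [CharZero K]
    (A : Type*) [AddCommGroup A] [Module K A]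
    (l r m : A → A → A) : Prop where
  di : IsDiassoc K A l r
  bil_m : IsBilin K m
  massoc : ∀ x y z, m (m x y) z = m x (m y z)
  t1 : ∀ x y z, r (r x y) z = r x (m y z)
  t2 : ∀ x y z, r (m x y) z = m x (r y z)
  t3 : ∀ x y z, m (r x y) z = m x (l y z)
  t4 : ∀ x y z, m (l x y) z = l x (m y z)
  t5 : ∀ x y z, l (m x y) z = l x (l y z)

/-- An action of a dendriform algebra `(D, p, s)` on a dendriform algebra
`(D', p', s')` via `(pl, sl, pr, sr)`. -/
structure IsDendAction (K : Type*) [Field K] [CharZero K]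
    (D : Type*) [AddCommGroup D] [Module K D]
    (D' : Type*) [AddCommGroup D'] [Module K D']
    (p s : D → D → D) (p' s' : D' → D' → D')
    (pl sl : D → D' → D') (pr sr : D' → D → D') : Prop where
  rep : IsDendRep K D D' p s pl sl pr sr
  a1 : ∀ x v w, p' (pl x v) w = pl x (p' v w + s' v w)
  a2 : ∀ x v w, p' (sl x v) w = sl x (p' v w)
  a3 : ∀ x v w, sl x (s' v w) = s' (pl x v + sl x v) w
  a4 : ∀ u y w, p' (pr u y) w = p' u (pl y w + sl y w)
  a5 : ∀ u y w, p' (sr u y) w = s' u (pl y w)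
  a6 : ∀ u y w, s' u (sl y w) = s' (pr u y + sr u y) w
  a7 : ∀ u v z, pr (p' u v) z = p' u (pr v z + sr v z)
  a8 : ∀ u v z, pr (s' u v) z = s' u (pr v z)
  a9 : ∀ u v z, s' u (sr v z) = sr (p' u v + s' u v) z

/-- A six-dendriform algebra
`(D, ≺⊥ = pp, ≻⊥ = sp, ≺⊢ = pv, ≺⊣ = pd, ≻⊢ = sv, ≻⊣ = sd)`. -/
structure IsSixDendriform (K : Type*) [Field K] [CharZero K]
    (D : Type*) [AddCommGroup D] [Module K D]
    (pp sp pv pd sv sd : D → D → D) : Prop where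
  dend : IsDendriform K D pp sp
  quad : IsQuadriDendriform K D pv pd sv sd
  e1 : ∀ x y z, pp (pv x y) z = pv x (pp y z + sp y z)
  e2 : ∀ x y z, pp (sv x y) z = sv x (pp y z)
  e3 : ∀ x y z, sv x (sp y z) = sp (pv x y + sv x y) z
  e4 : ∀ x y z, pp (pd x y) z = pp x (pv y z + sv y z)
  e5 : ∀ x y z, pp (sd x y) z = sp x (pv y z)
  e6 : ∀ x y z, sp x (sv y z) = sp (pd x y + sd x y) z
  e7 : ∀ x y z, pd (pp x y) z = pp x (pd y z + sd y z)
  e8 : ∀ x y z, pd (sp x y) z = sp x (pd y z)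
  e9 : ∀ x y z, sp x (sd y z) = sd (pp x y + sp x y) z
  e10a : ∀ x y z, pv (pp x y) z = pv (pv x y) z
  e10b : ∀ x y z, pv (pv x y) z = pv (pd x y) z
  e11a : ∀ x y z, pv (sp x y) z = pv (sv x y) z
  e11b : ∀ x y z, pv (sv x y) z = pv (sd x y) z
  e12a : ∀ x y z, sv (pp x y) z = sv (pv x y) z
  e12b : ∀ x y z, sv (pv x y) z = sv (pd x y) z
  e13a : ∀ x y z, sv (sp x y) z = sv (sv x y) z
  e13b : ∀ x y z, sv (sv x y) z = sv (sd x y) z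
  e14a : ∀ x y z, pd x (pp y z) = pd x (pv y z)
  e14b : ∀ x y z, pd x (pv y z) = pd x (pd y z)
  e15a : ∀ x y z, sd x (pp y z) = sd x (pv y z)
  e15b : ∀ x y z, sd x (pv y z) = sd x (pd y z)
  e16a : ∀ x y z, pd x (sp y z) = pd x (sv y z)
  e16b : ∀ x y z, pd x (sv y z) = pd x (sd y z)
  e17a : ∀ x y z, sd x (sp y z) = sd x (sv y z)
  e17b : ∀ x y z, sd x (sv y z) = sd x (sd y z)

/-- An averaging operator on a dendriform algebra `(D, p, s)`. -/
def IsAveraging (K : Type*) [Field K] [CharZero K]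
    (D : Type*) [AddCommGroup D] [Module K D]
    (p s : D → D → D) (T : D →ₗ[K] D) : Prop :=
  ∀ x y : D,
    p (T x) (T y) = T (p (T x) y) ∧ p (T x) (T y) = T (p x (T y)) ∧
    s (T x) (T y) = T (s (T x) y) ∧ s (T x) (T y) = T (s x (T y))

/-- A relative averaging operator `T : V → D` on a dendriform algebra `(D, p, s)`
with respect to a representation `(V; pl, sl, pr, sr)`. -/
def IsRelAveraging (K : Type*) [Field K] [CharZero K]
    (D : Type*) [AddCommGroup D] [Module K D]
    (V : Type*) [AddCommGroup V] [Module K V]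
    (p s : D → D → D)
    (pl sl : D → V → V) (pr sr : V → D → V)
    (T : V →ₗ[K] D) : Prop :=
  ∀ u v : V,
    p (T u) (T v) = T (pl (T u) v) ∧ p (T u) (T v) = T (pr u (T v)) ∧
    s (T u) (T v) = T (sl (T u) v) ∧ s (T u) (T v) = T (sr u (T v))


theorem stmt_16 (K : Type*) [Field K] [CharZero K]
    (D : Type*) [AddCommGroup D] [Module K D]
    (pp sp pv pd sv sd : D → D → D)
    (h : IsSixDendriform K D pp sp pv pd sv sd) :
    IsTriassoc K D
      (fun x y => pv x y + sv x y)
      (fun x y => pd x y + sd x y)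
      (fun x y => pp x y + sp x y) := by
  obtain ⟨⟨ppa, pps, ppa', pps'⟩, ⟨spa, sps, spa', sps'⟩, dd1, dd2, dd3⟩ := h.dend
  obtain ⟨⟨pva, pvs, pva', pvs'⟩, ⟨pda, pds, pda', pds'⟩, ⟨sva, svs, sva', svs'⟩,
    ⟨sda, sds, sda', sds'⟩, q1a, q1b, q2a, q2b, q3a, q3b, q3c, q3d, q4, q5, q6,
    q7a, q7b, q7c, q7d, q8a, q8b, q9a, q9b⟩ := h.quad
  refine ⟨⟨?_, ?_, ?_, ?_, ?_, ?_, ?_⟩, ?_, ?_, ?_, ?_, ?_, ?_, ?_⟩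
  · -- bil_l
    refine ⟨fun a a' b => ?_, fun c a b => ?_, fun a b b' => ?_, fun c a b => ?_⟩ <;>
      simp only [pva, pva', sva, sva', pvs, pvs', svs, svs', smul_add] <;> abel
  · -- bil_r
    refine ⟨fun a a' b => ?_, fun c a b => ?_, fun a b b' => ?_, fun c a b => ?_⟩ <;>
      simp only [pda, pda', sda, sda', pds, pds', sds, sds', smul_add] <;> abel
  · -- di d1
    intro x y z
    simp only [pda, pda', sda, sda', q7b, q8b, q9b]
    abel
  · -- di d2
    intro x y z
    simp only [pda, pda', sda, sda', pva', sva', q7a, q8a, q9a, q9b]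
    abel
  · -- di d3
    intro x y z
    simp only [pda, pda', sda, sda', pva, pva', sva, sva', q4, q5, q6]
    abel
  · -- di d4
    intro x y z
    simp only [pda, pda', sda, sda', pva, pva', sva, sva', q1b, q2b, q3b]
    abel
  · -- di d5
    intro x y z
    simp only [pva, pva', sva, sva', q1a, q2a, q3a]
    abel
  · -- bil_m
    refine ⟨fun a a' b => ?_, fun c a b => ?_, fun a b b' => ?_, fun c a b => ?_⟩ <;>
      simp only [ppa, ppa', spa, spa', pps, pps', sps, sps', smul_add] <;> abel
  · -- massoc
    intro x y z
    simp only [ppa, ppa', spa, spa', dd1, dd2, dd3]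
    abel
  · -- t1
    intro x y z
    simp only [pda, pda', sda, sda', ppa', spa', h.e14a, h.e14b, h.e15a, h.e15b,
      h.e16a, h.e16b, h.e17a, h.e17b, q7b, q8b, q9b]
    abel
  · -- t2
    intro x y z
    simp only [pda, pda', sda, sda', ppa, ppa', spa, spa', h.e7, h.e8, h.e9]
    abel
  · -- t3
    intro x y z
    simp only [ppa, ppa', spa, spa', pda, sda, pva', sva', h.e4, h.e5, h.e6]
    abel
  · -- t4
    intro x y z
    simp only [ppa, ppa', spa, spa', pva, pva', sva, sva', h.e1, h.e2, h.e3]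
    abel
  · -- t5
    intro x y z
    simp only [pva, pva', sva, sva', ppa, spa, h.e10a, h.e11a, h.e12a, h.e13a,
      q1a, q2a, q3a]
    abel
end

section
/- Let T : D' → D be a homomorphic relative averaging operator on a dendriform algebra (D, ≺, ≻) with respect to an action (D', ≺', ≻'; ≺ₗ, ≻ₗ, ≺ᵣ, ≻ᵣ). Then D' with the six operations u ≺⊥ v = u≺'v, u ≻⊥ v = u≻'v, u ≺⊢ᵀ v = Tu≺ₗv, u ≺⊣ᵀ v = u≺ᵣTv, u ≻⊢ᵀ v = Tu≻ₗv, u ≻⊣ᵀ v = u≻ᵣTv is a six-dendriform algebra. -/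
theorem stmt_17 (K : Type*) [Field K] [CharZero K]
    (D : Type*) [AddCommGroup D] [Module K D]
    (D' : Type*) [AddCommGroup D'] [Module K D']
    (p s : D → D → D) (p' s' : D' → D' → D')
    (pl sl : D → D' → D') (pr sr : D' → D → D')
    (hD : IsDendriform K D p s)
    (hD' : IsDendriform K D' p' s')
    (hact : IsDendAction K D D' p s p' s' pl sl pr sr)
    (T : D' →ₗ[K] D)
    (hT : IsRelAveraging K D D' p s pl sl pr sr T)
    (hhom1 : ∀ u v : D', T (p' u v) = p (T u) (T v))
    (hhom2 : ∀ u v : D', T (s' u v) = s (T u) (T v)) :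
    IsSixDendriform K D' p' s'
      (fun u v => pl (T u) v) (fun u v => pr u (T v))
      (fun u v => sl (T u) v) (fun u v => sr u (T v)) := by
  obtain ⟨rep, a1, a2, a3, a4, a5, a6, a7, a8, a9⟩ := hact
  have h1 : ∀ u v : D', T (pl (T u) v) = p (T u) (T v) := fun u v => ((hT u v).1).symm
  have h2 : ∀ u v : D', T (pr u (T v)) = p (T u) (T v) := fun u v => ((hT u v).2.1).symm
  have h3 : ∀ u v : D', T (sl (T u) v) = s (T u) (T v) := fun u v => ((hT u v).2.2.1).symm
  have h4 : ∀ u v : D', T (sr u (T v)) = s (T u) (T v) := fun u v => ((hT u v).2.2.2).symm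
  refine
  { dend := hD'
    quad :=
    { bil_pv := ⟨fun a a' b => by simp only [map_add, rep.bil_pl.1],
        fun c a b => by simp only [map_smul, rep.bil_pl.2.1],
        fun a b b' => rep.bil_pl.2.2.1 (T a) b b',
        fun c a b => rep.bil_pl.2.2.2 c (T a) b⟩
      bil_pd := ⟨fun a a' b => rep.bil_pr.1 a a' (T b),
        fun c a b => rep.bil_pr.2.1 c a (T b),
        fun a b b' => by simp only [map_add, rep.bil_pr.2.2.1],
        fun c a b => by simp only [map_smul, rep.bil_pr.2.2.2]⟩
      bil_sv := ⟨fun a a' b => by simp only [map_add, rep.bil_sl.1],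
        fun c a b => by simp only [map_smul, rep.bil_sl.2.1],
        fun a b b' => rep.bil_sl.2.2.1 (T a) b b',
        fun c a b => rep.bil_sl.2.2.2 c (T a) b⟩
      bil_sd := ⟨fun a a' b => rep.bil_sr.1 a a' (T b),
        fun c a b => rep.bil_sr.2.1 c a (T b),
        fun a b b' => by simp only [map_add, rep.bil_sr.2.2.1],
        fun c a b => by simp only [map_smul, rep.bil_sr.2.2.2]⟩
      q1a := fun x y z => by simp only [map_add, map_smul, h1, h2, h3, h4, hhom1, hhom2, rep.r1, rep.r2, rep.r3, rep.r4, rep.r5, rep.r6, rep.r7, rep.r8, rep.r9, a1, a2, a3, a4, a5, a6, a7, a8, a9]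
      q1b := fun x y z => by simp only [map_add, map_smul, h1, h2, h3, h4, hhom1, hhom2, rep.r1, rep.r2, rep.r3, rep.r4, rep.r5, rep.r6, rep.r7, rep.r8, rep.r9, a1, a2, a3, a4, a5, a6, a7, a8, a9]
      q2a := fun x y z => by simp only [map_add, map_smul, h1, h2, h3, h4, hhom1, hhom2, rep.r1, rep.r2, rep.r3, rep.r4, rep.r5, rep.r6, rep.r7, rep.r8, rep.r9, a1, a2, a3, a4, a5, a6, a7, a8, a9]
      q2b := fun x y z => by simp only [map_add, map_smul, h1, h2, h3, h4, hhom1, hhom2, rep.r1, rep.r2, rep.r3, rep.r4, rep.r5, rep.r6, rep.r7, rep.r8, rep.r9, a1, a2, a3, a4, a5, a6, a7, a8, a9]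
      q3a := fun x y z => by simp only [map_add, map_smul, h1, h2, h3, h4, hhom1, hhom2, rep.r1, rep.r2, rep.r3, rep.r4, rep.r5, rep.r6, rep.r7, rep.r8, rep.r9, a1, a2, a3, a4, a5, a6, a7, a8, a9]
      q3b := fun x y z => by simp only [map_add, map_smul, h1, h2, h3, h4, hhom1, hhom2, rep.r1, rep.r2, rep.r3, rep.r4, rep.r5, rep.r6, rep.r7, rep.r8, rep.r9, a1, a2, a3, a4, a5, a6, a7, a8, a9]
      q3c := fun x y z => by simp only [map_add, map_smul, h1, h2, h3, h4, hhom1, hhom2, rep.r1, rep.r2, rep.r3, rep.r4, rep.r5, rep.r6, rep.r7, rep.r8, rep.r9, a1, a2, a3, a4, a5, a6, a7, a8, a9]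
      q3d := fun x y z => by simp only [map_add, map_smul, h1, h2, h3, h4, hhom1, hhom2, rep.r1, rep.r2, rep.r3, rep.r4, rep.r5, rep.r6, rep.r7, rep.r8, rep.r9, a1, a2, a3, a4, a5, a6, a7, a8, a9]
      q4 := fun x y z => by simp only [map_add, map_smul, h1, h2, h3, h4, hhom1, hhom2, rep.r1, rep.r2, rep.r3, rep.r4, rep.r5, rep.r6, rep.r7, rep.r8, rep.r9, a1, a2, a3, a4, a5, a6, a7, a8, a9]
      q5 := fun x y z => by simp only [map_add, map_smul, h1, h2, h3, h4, hhom1, hhom2, rep.r1, rep.r2, rep.r3, rep.r4, rep.r5, rep.r6, rep.r7, rep.r8, rep.r9, a1, a2, a3, a4, a5, a6, a7, a8, a9]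
      q6 := fun x y z => by simp only [map_add, map_smul, h1, h2, h3, h4, hhom1, hhom2, rep.r1, rep.r2, rep.r3, rep.r4, rep.r5, rep.r6, rep.r7, rep.r8, rep.r9, a1, a2, a3, a4, a5, a6, a7, a8, a9]
      q7a := fun x y z => by simp only [map_add, map_smul, h1, h2, h3, h4, hhom1, hhom2, rep.r1, rep.r2, rep.r3, rep.r4, rep.r5, rep.r6, rep.r7, rep.r8, rep.r9, a1, a2, a3, a4, a5, a6, a7, a8, a9]
      q7b := fun x y z => by simp only [map_add, map_smul, h1, h2, h3, h4, hhom1, hhom2, rep.r1, rep.r2, rep.r3, rep.r4, rep.r5, rep.r6, rep.r7, rep.r8, rep.r9, a1, a2, a3, a4, a5, a6, a7, a8, a9]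
      q7c := fun x y z => by simp only [map_add, map_smul, h1, h2, h3, h4, hhom1, hhom2, rep.r1, rep.r2, rep.r3, rep.r4, rep.r5, rep.r6, rep.r7, rep.r8, rep.r9, a1, a2, a3, a4, a5, a6, a7, a8, a9]
      q7d := fun x y z => by simp only [map_add, map_smul, h1, h2, h3, h4, hhom1, hhom2, rep.r1, rep.r2, rep.r3, rep.r4, rep.r5, rep.r6, rep.r7, rep.r8, rep.r9, a1, a2, a3, a4, a5, a6, a7, a8, a9]
      q8a := fun x y z => by simp only [map_add, map_smul, h1, h2, h3, h4, hhom1, hhom2, rep.r1, rep.r2, rep.r3, rep.r4, rep.r5, rep.r6, rep.r7, rep.r8, rep.r9, a1, a2, a3, a4, a5, a6, a7, a8, a9]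
      q8b := fun x y z => by simp only [map_add, map_smul, h1, h2, h3, h4, hhom1, hhom2, rep.r1, rep.r2, rep.r3, rep.r4, rep.r5, rep.r6, rep.r7, rep.r8, rep.r9, a1, a2, a3, a4, a5, a6, a7, a8, a9]
      q9a := fun x y z => by simp only [map_add, map_smul, h1, h2, h3, h4, hhom1, hhom2, rep.r1, rep.r2, rep.r3, rep.r4, rep.r5, rep.r6, rep.r7, rep.r8, rep.r9, a1, a2, a3, a4, a5, a6, a7, a8, a9]
      q9b := fun x y z => by simp only [map_add, map_smul, h1, h2, h3, h4, hhom1, hhom2, rep.r1, rep.r2, rep.r3, rep.r4, rep.r5, rep.r6, rep.r7, rep.r8, rep.r9, a1, a2, a3, a4, a5, a6, a7, a8, a9]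
    }
    e1 := fun x y z => by simp only [map_add, map_smul, h1, h2, h3, h4, hhom1, hhom2, rep.r1, rep.r2, rep.r3, rep.r4, rep.r5, rep.r6, rep.r7, rep.r8, rep.r9, a1, a2, a3, a4, a5, a6, a7, a8, a9]
    e2 := fun x y z => by simp only [map_add, map_smul, h1, h2, h3, h4, hhom1, hhom2, rep.r1, rep.r2, rep.r3, rep.r4, rep.r5, rep.r6, rep.r7, rep.r8, rep.r9, a1, a2, a3, a4, a5, a6, a7, a8, a9]
    e3 := fun x y z => by simp only [map_add, map_smul, h1, h2, h3, h4, hhom1, hhom2, rep.r1, rep.r2, rep.r3, rep.r4, rep.r5, rep.r6, rep.r7, rep.r8, rep.r9, a1, a2, a3, a4, a5, a6, a7, a8, a9]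
    e4 := fun x y z => by simp only [map_add, map_smul, h1, h2, h3, h4, hhom1, hhom2, rep.r1, rep.r2, rep.r3, rep.r4, rep.r5, rep.r6, rep.r7, rep.r8, rep.r9, a1, a2, a3, a4, a5, a6, a7, a8, a9]
    e5 := fun x y z => by simp only [map_add, map_smul, h1, h2, h3, h4, hhom1, hhom2, rep.r1, rep.r2, rep.r3, rep.r4, rep.r5, rep.r6, rep.r7, rep.r8, rep.r9, a1, a2, a3, a4, a5, a6, a7, a8, a9]
    e6 := fun x y z => by simp only [map_add, map_smul, h1, h2, h3, h4, hhom1, hhom2, rep.r1, rep.r2, rep.r3, rep.r4, rep.r5, rep.r6, rep.r7, rep.r8, rep.r9, a1, a2, a3, a4, a5, a6, a7, a8, a9]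
    e7 := fun x y z => by simp only [map_add, map_smul, h1, h2, h3, h4, hhom1, hhom2, rep.r1, rep.r2, rep.r3, rep.r4, rep.r5, rep.r6, rep.r7, rep.r8, rep.r9, a1, a2, a3, a4, a5, a6, a7, a8, a9]
    e8 := fun x y z => by simp only [map_add, map_smul, h1, h2, h3, h4, hhom1, hhom2, rep.r1, rep.r2, rep.r3, rep.r4, rep.r5, rep.r6, rep.r7, rep.r8, rep.r9, a1, a2, a3, a4, a5, a6, a7, a8, a9]
    e9 := fun x y z => by simp only [map_add, map_smul, h1, h2, h3, h4, hhom1, hhom2, rep.r1, rep.r2, rep.r3, rep.r4, rep.r5, rep.r6, rep.r7, rep.r8, rep.r9, a1, a2, a3, a4, a5, a6, a7, a8, a9]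
    e10a := fun x y z => by simp only [map_add, map_smul, h1, h2, h3, h4, hhom1, hhom2, rep.r1, rep.r2, rep.r3, rep.r4, rep.r5, rep.r6, rep.r7, rep.r8, rep.r9, a1, a2, a3, a4, a5, a6, a7, a8, a9]
    e10b := fun x y z => by simp only [map_add, map_smul, h1, h2, h3, h4, hhom1, hhom2, rep.r1, rep.r2, rep.r3, rep.r4, rep.r5, rep.r6, rep.r7, rep.r8, rep.r9, a1, a2, a3, a4, a5, a6, a7, a8, a9]
    e11a := fun x y z => by simp only [map_add, map_smul, h1, h2, h3, h4, hhom1, hhom2, rep.r1, rep.r2, rep.r3, rep.r4, rep.r5, rep.r6, rep.r7, rep.r8, rep.r9, a1, a2, a3, a4, a5, a6, a7, a8, a9]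
    e11b := fun x y z => by simp only [map_add, map_smul, h1, h2, h3, h4, hhom1, hhom2, rep.r1, rep.r2, rep.r3, rep.r4, rep.r5, rep.r6, rep.r7, rep.r8, rep.r9, a1, a2, a3, a4, a5, a6, a7, a8, a9]
    e12a := fun x y z => by simp only [map_add, map_smul, h1, h2, h3, h4, hhom1, hhom2, rep.r1, rep.r2, rep.r3, rep.r4, rep.r5, rep.r6, rep.r7, rep.r8, rep.r9, a1, a2, a3, a4, a5, a6, a7, a8, a9]
    e12b := fun x y z => by simp only [map_add, map_smul, h1, h2, h3, h4, hhom1, hhom2, rep.r1, rep.r2, rep.r3, rep.r4, rep.r5, rep.r6, rep.r7, rep.r8, rep.r9, a1, a2, a3, a4, a5, a6, a7, a8, a9]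
    e13a := fun x y z => by simp only [map_add, map_smul, h1, h2, h3, h4, hhom1, hhom2, rep.r1, rep.r2, rep.r3, rep.r4, rep.r5, rep.r6, rep.r7, rep.r8, rep.r9, a1, a2, a3, a4, a5, a6, a7, a8, a9]
    e13b := fun x y z => by simp only [map_add, map_smul, h1, h2, h3, h4, hhom1, hhom2, rep.r1, rep.r2, rep.r3, rep.r4, rep.r5, rep.r6, rep.r7, rep.r8, rep.r9, a1, a2, a3, a4, a5, a6, a7, a8, a9]
    e14a := fun x y z => by simp only [map_add, map_smul, h1, h2, h3, h4, hhom1, hhom2, rep.r1, rep.r2, rep.r3, rep.r4, rep.r5, rep.r6, rep.r7, rep.r8, rep.r9, a1, a2, a3, a4, a5, a6, a7, a8, a9]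
    e14b := fun x y z => by simp only [map_add, map_smul, h1, h2, h3, h4, hhom1, hhom2, rep.r1, rep.r2, rep.r3, rep.r4, rep.r5, rep.r6, rep.r7, rep.r8, rep.r9, a1, a2, a3, a4, a5, a6, a7, a8, a9]
    e15a := fun x y z => by simp only [map_add, map_smul, h1, h2, h3, h4, hhom1, hhom2, rep.r1, rep.r2, rep.r3, rep.r4, rep.r5, rep.r6, rep.r7, rep.r8, rep.r9, a1, a2, a3, a4, a5, a6, a7, a8, a9]
    e15b := fun x y z => by simp only [map_add, map_smul, h1, h2, h3, h4, hhom1, hhom2, rep.r1, rep.r2, rep.r3, rep.r4, rep.r5, rep.r6, rep.r7, rep.r8, rep.r9, a1, a2, a3, a4, a5, a6, a7, a8, a9]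
    e16a := fun x y z => by simp only [map_add, map_smul, h1, h2, h3, h4, hhom1, hhom2, rep.r1, rep.r2, rep.r3, rep.r4, rep.r5, rep.r6, rep.r7, rep.r8, rep.r9, a1, a2, a3, a4, a5, a6, a7, a8, a9]
    e16b := fun x y z => by simp only [map_add, map_smul, h1, h2, h3, h4, hhom1, hhom2, rep.r1, rep.r2, rep.r3, rep.r4, rep.r5, rep.r6, rep.r7, rep.r8, rep.r9, a1, a2, a3, a4, a5, a6, a7, a8, a9]
    e17a := fun x y z => by simp only [map_add, map_smul, h1, h2, h3, h4, hhom1, hhom2, rep.r1, rep.r2, rep.r3, rep.r4, rep.r5, rep.r6, rep.r7, rep.r8, rep.r9, a1, a2, a3, a4, a5, a6, a7, a8, a9]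
    e17b := fun x y z => by simp only [map_add, map_smul, h1, h2, h3, h4, hhom1, hhom2, rep.r1, rep.r2, rep.r3, rep.r4, rep.r5, rep.r6, rep.r7, rep.r8, rep.r9, a1, a2, a3, a4, a5, a6, a7, a8, a9]
  }
end

section
/- Let (D, ≺, ≻) be a dendriform algebra and T : D → D a homomorphic averaging operator, i.e. an averaging operator that is also a dendriform algebra homomorphism: T(x≺y) = Tx ≺ Ty and T(x≻y) = Tx ≻ Ty for all x, y ∈ D. Then D with the six operations ≺⊥ = ≺, ≻⊥ = ≻, x ≺⊢ᵀ y = Tx≺y, x ≺⊣ᵀ y = x≺Ty, x ≻⊢ᵀ y = Tx≻y, x ≻⊣ᵀ y = x≻Ty is a six-dendriform algebra. -/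
theorem stmt_18 (K : Type*) [Field K] [CharZero K]
    (D : Type*) [AddCommGroup D] [Module K D]
    (p s : D → D → D) (hD : IsDendriform K D p s)
    (T : D →ₗ[K] D) (hT : IsAveraging K D p s T)
    (hhom1 : ∀ x y : D, T (p x y) = p (T x) (T y))
    (hhom2 : ∀ x y : D, T (s x y) = s (T x) (T y)) :
    IsSixDendriform K D p s
      (fun x y => p (T x) y) (fun x y => p x (T y))
      (fun x y => s (T x) y) (fun x y => s x (T y)) := by

  obtain ⟨hp1, hp2, hp3, hp4⟩ := hD.bil_p
  obtain ⟨hs1, hs2, hs3, hs4⟩ := hD.bil_s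
  have A1 : ∀ x y, T (p (T x) y) = p (T x) (T y) := fun x y => ((hT x y).1).symm
  have A2 : ∀ x y, T (p x (T y)) = p (T x) (T y) := fun x y => ((hT x y).2.1).symm
  have A3 : ∀ x y, T (s (T x) y) = s (T x) (T y) := fun x y => ((hT x y).2.2.1).symm
  have A4 : ∀ x y, T (s x (T y)) = s (T x) (T y) := fun x y => ((hT x y).2.2.2).symm
  refine
  { dend := hD
    quad :=
    { bil_pv := ⟨fun a a' b => by simp only [map_add, hp1], fun c a b => by simp only [map_smul, hp2],
        fun a b b' => hp3 (T a) b b', fun c a b => hp4 c (T a) b⟩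
      bil_pd := ⟨fun a a' b => hp1 a a' (T b), fun c a b => hp2 c a (T b),
        fun a b b' => by simp only [map_add, hp3], fun c a b => by simp only [map_smul, hp4]⟩
      bil_sv := ⟨fun a a' b => by simp only [map_add, hs1], fun c a b => by simp only [map_smul, hs2],
        fun a b b' => hs3 (T a) b b', fun c a b => hs4 c (T a) b⟩
      bil_sd := ⟨fun a a' b => hs1 a a' (T b), fun c a b => hs2 c a (T b),
        fun a b b' => by simp only [map_add, hs3], fun c a b => by simp only [map_smul, hs4]⟩
      q1a := fun x y z => by simp only [A1]; exact hD.d1 _ _ _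
      q1b := fun x y z => by simp only [A2]; exact hD.d1 _ _ _
      q2a := fun x y z => by simp only [A3]; exact hD.d2 _ _ _
      q2b := fun x y z => by simp only [A4]; exact hD.d2 _ _ _
      q3a := fun x y z => by simp only [map_add, A1, A3]; exact hD.d3 _ _ _
      q3b := fun x y z => by simp only [map_add, A2, A4]; exact hD.d3 _ _ _
      q3c := fun x y z => by simp only [map_add, A1, A4]; exact hD.d3 _ _ _
      q3d := fun x y z => by simp only [map_add, A2, A3]; exact hD.d3 _ _ _
      q4 := fun x y z => hD.d1 _ _ _
      q5 := fun x y z => hD.d2 _ _ _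
      q6 := fun x y z => hD.d3 _ _ _
      q7a := fun x y z => by simp only [map_add, A1, A3]; exact hD.d1 _ _ _
      q7b := fun x y z => by simp only [map_add, A2, A4]; exact hD.d1 _ _ _
      q7c := fun x y z => by simp only [map_add, A1, A4]; exact hD.d1 _ _ _
      q7d := fun x y z => by simp only [map_add, A2, A3]; exact hD.d1 _ _ _
      q8a := fun x y z => by simp only [A1]; exact hD.d2 _ _ _
      q8b := fun x y z => by simp only [A2]; exact hD.d2 _ _ _
      q9a := fun x y z => by simp only [A3, A4]
      q9b := fun x y z => by simp only [A4]; exact hD.d3 _ _ _ }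
    e1 := fun x y z => hD.d1 _ _ _
    e2 := fun x y z => hD.d2 _ _ _
    e3 := fun x y z => hD.d3 _ _ _
    e4 := fun x y z => hD.d1 _ _ _
    e5 := fun x y z => hD.d2 _ _ _
    e6 := fun x y z => hD.d3 _ _ _
    e7 := fun x y z => hD.d1 _ _ _
    e8 := fun x y z => hD.d2 _ _ _
    e9 := fun x y z => hD.d3 _ _ _
    e10a := fun x y z => by rw [hhom1, A1]
    e10b := fun x y z => by rw [A1, A2]
    e11a := fun x y z => by rw [hhom2, A3]
    e11b := fun x y z => by rw [A3, A4]
    e12a := fun x y z => by rw [hhom1, A1]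
    e12b := fun x y z => by rw [A1, A2]
    e13a := fun x y z => by rw [hhom2, A3]
    e13b := fun x y z => by rw [A3, A4]
    e14a := fun x y z => by rw [hhom1, A1]
    e14b := fun x y z => by rw [A1, A2]
    e15a := fun x y z => by rw [hhom1, A1]
    e15b := fun x y z => by rw [A1, A2]
    e16a := fun x y z => by rw [hhom2, A3]
    e16b := fun x y z => by rw [A3, A4]
    e17a := fun x y z => by rw [hhom2, A3]
    e17b := fun x y z => by rw [A3, A4] }
end

section
/- Let (D, ≺, ≻) be a dendriform algebra. On F = D × D (the dual numbers D[t]/(t²) with (a,b) representing a + tb) define (a,b) ≺'' (c,d) = (a≺c, a≺d + b≺c) and (a,b) ≻'' (c,d) = (a≻c, a≻d + b≻c), and define x ≺ₗ (a,b) = (x≺a, x≺b), x ≻ₗ (a,b) = (x≻a, x≻b), (a,b) ≺ᵣ x = (a≺x, b≺x), (a,b) ≻ᵣ x = (a≻x, b≻x) for x ∈ D. Then (F, ≺'', ≻'') is a dendriform algebra, these maps define an action of D on F, and the projection T : F → D, T(a,b) = a, is a homomorphic relative averaging operator on D with respect to this action. -/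
theorem stmt_19 (K : Type*) [Field K] [CharZero K]
    (D : Type*) [AddCommGroup D] [Module K D]
    (p s : D → D → D) (hD : IsDendriform K D p s) :
    IsDendriform K (D × D)
      (fun a b => (p a.1 b.1, p a.1 b.2 + p a.2 b.1))
      (fun a b => (s a.1 b.1, s a.1 b.2 + s a.2 b.1)) ∧
    IsDendAction K D (D × D) p s
      (fun a b => (p a.1 b.1, p a.1 b.2 + p a.2 b.1))
      (fun a b => (s a.1 b.1, s a.1 b.2 + s a.2 b.1))
      (fun x a => ((p x a.1, p x a.2) : D × D))
      (fun x a => ((s x a.1, s x a.2) : D × D))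
      (fun a x => ((p a.1 x, p a.2 x) : D × D))
      (fun a x => ((s a.1 x, s a.2 x) : D × D)) ∧
    IsRelAveraging K D (D × D) p s
      (fun x a => ((p x a.1, p x a.2) : D × D))
      (fun x a => ((s x a.1, s x a.2) : D × D))
      (fun a x => ((p a.1 x, p a.2 x) : D × D))
      (fun a x => ((s a.1 x, s a.2 x) : D × D))
      (LinearMap.fst K D D) ∧
    (∀ u v : D × D,
      LinearMap.fst K D D
        ((fun a b : D × D => ((p a.1 b.1, p a.1 b.2 + p a.2 b.1) : D × D)) u v) =
        p (LinearMap.fst K D D u) (LinearMap.fst K D D v)) ∧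
    (∀ u v : D × D,
      LinearMap.fst K D D
        ((fun a b : D × D => ((s a.1 b.1, s a.1 b.2 + s a.2 b.1) : D × D)) u v) =
        s (LinearMap.fst K D D u) (LinearMap.fst K D D v)) := by

  obtain ⟨⟨pa, ps, pa', ps'⟩, ⟨sa, ss, sa', ss'⟩, d1, d2, d3⟩ := hD
  have bil : ∀ f : D → D → D, IsBilin K f →
      (IsBilin K (fun (a b : D × D) => ((f a.1 b.1, f a.1 b.2 + f a.2 b.1) : D × D)) ∧
       IsBilin K (fun (x : D) (a : D × D) => ((f x a.1, f x a.2) : D × D)) ∧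
       IsBilin K (fun (a : D × D) (x : D) => ((f a.1 x, f a.2 x) : D × D))) := by
    rintro f ⟨fa, fs, fa', fs'⟩
    refine ⟨⟨?_, ?_, ?_, ?_⟩, ⟨?_, ?_, ?_, ?_⟩, ⟨?_, ?_, ?_, ?_⟩⟩ <;> intros <;>
      simp only [Prod.fst_add, Prod.snd_add, Prod.smul_fst, Prod.smul_snd, Prod.mk_add_mk,
        Prod.smul_mk, fa, fs, fa', fs', smul_add, Prod.mk.injEq] <;> constructor <;> (try trivial) <;> abel
  refine ⟨⟨(bil p ⟨pa, ps, pa', ps'⟩).1, (bil s ⟨sa, ss, sa', ss'⟩).1, ?_, ?_, ?_⟩,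
    ⟨⟨(bil p ⟨pa, ps, pa', ps'⟩).2.1, (bil s ⟨sa, ss, sa', ss'⟩).2.1,
      (bil p ⟨pa, ps, pa', ps'⟩).2.2, (bil s ⟨sa, ss, sa', ss'⟩).2.2,
      ?_, ?_, ?_, ?_, ?_, ?_, ?_, ?_, ?_⟩, ?_, ?_, ?_, ?_, ?_, ?_, ?_, ?_, ?_⟩,
    ?_, ?_, ?_⟩ <;> intros <;>
    first
    | exact ⟨rfl, rfl, rfl, rfl⟩
    | exact fun u v => ⟨rfl, rfl, rfl, rfl⟩
    | rfl
    | (refine Prod.ext ?_ ?_ <;>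
        simp only [Prod.fst_add, Prod.snd_add, pa, pa', sa, sa', d1, d2, d3] <;>
        try abel)
end
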